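/- arXiv:2604.20794 — 3 statements merged into one kernel-verified Lean document; each statement's English description precedes it below -/
import Mathlib

section
/- Let H, D : [0,1] → ℝ be differentiable with H > 0, and set N = D/H. Suppose f(·,t) ∈ L² is smooth, 𝒮 symmetric and 𝒜 skew-symmetric operators, H(t) = ‖f(t)‖² and D(t) = ⟨𝒮f, f⟩. Then ∂_t N ≥ (⟨𝒮_t f + [𝒮,𝒜]f, f⟩)/H - ‖∂_t f - 𝒜f - 𝒮f‖²/(2H). -/
/-!
Write `u = f t`, `H = ‖u‖²` and `N = ⟪S u, u⟫ / H` (the Rayleigh quotient). Symmetry of `S`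
gives `N' = (⟪S' u, u⟫ + 2 ⟪w, f'⟫) / H` with `w = S u - N u`, and `w ⊥ u`. Splitting
`f' = g + A u + S u`, skew-symmetry turns `2 ⟪w, A u⟫` into `⟪[S, A] u, u⟫`, and `⟪w, S u⟫ = ‖w‖²`,
so `2 ⟪w, f'⟫ = ⟪[S, A] u, u⟫ + 2 (⟪w, g⟫ + ‖w‖²)`. Completing the square,
`⟪w, g⟫ + ‖w‖² ≥ -‖g‖² / 4`.
-/

open scoped RealInnerProductSpace

section RealInnerProductSpace

variable {F : Type*} [NormedAddCommGroup F] [InnerProductSpace ℝ F]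

theorem neg_norm_sq_div_four_le_inner_add_norm_sq (w g : F) :
    -(‖g‖ ^ 2 / 4) ≤ ⟪w, g⟫ + ‖w‖ ^ 2 := by
  have h := sq_nonneg ‖w + (2⁻¹ : ℝ) • g‖
  rw [norm_add_sq_real, norm_smul, inner_smul_right, Real.norm_of_nonneg (by norm_num)] at h
  linarith

namespace ContinuousLinearMap

theorem rayleighQuotient_eq_inner_div (T : F →L[ℝ] F) (x : F) :
    T.rayleighQuotient x = ⟪T x, x⟫ / ‖x‖ ^ 2 := rfl

theorem inner_apply_self_eq_zero_of_skew {A : F →L[ℝ] F} (hA : ∀ x y, ⟪A x, y⟫ = -⟪x, A y⟫)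
    (x : F) : ⟪A x, x⟫ = 0 := by
  linarith [hA x x, real_inner_comm x (A x)]

theorem inner_sub_rayleighQuotient_smul_self {T : F →L[ℝ] F} {x : F} (hx : x ≠ 0) :
    ⟪T x - T.rayleighQuotient x • x, x⟫ = 0 := by
  have : ‖x‖ ≠ 0 := norm_ne_zero_iff.mpr hx
  rw [inner_sub_left, real_inner_smul_left, real_inner_self_eq_norm_sq,
    rayleighQuotient_eq_inner_div]
  field_simp
  ring

theorem two_inner_sub_rayleighQuotient_smul_eq {S A : F →L[ℝ] F} (hS : (S : F →ₗ[ℝ] F).IsSymmetric)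
    (hA : ∀ x y, ⟪A x, y⟫ = -⟪x, A y⟫) {u : F} (hu : u ≠ 0) (v : F) :
    2 * ⟪S u - S.rayleighQuotient u • u, v⟫ =
      ⟪S (A u) - A (S u), u⟫ + 2 * (⟪S u - S.rayleighQuotient u • u, v - A u - S u⟫
        + ‖S u - S.rayleighQuotient u • u‖ ^ 2) := by
  set w := S u - S.rayleighQuotient u • u with hw
  have hwu : ⟪w, u⟫ = 0 := inner_sub_rayleighQuotient_smul_self hu
  have hwS : ⟪w, S u⟫ = ‖w‖ ^ 2 := by
    rw [← real_inner_self_eq_norm_sq, show S u = w + S.rayleighQuotient u • u by rw [hw]; abel,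
      inner_add_right, inner_smul_right, hwu, mul_zero, add_zero]
  have hwA : ⟪w, A u⟫ = ⟪S u, A u⟫ := by
    rw [hw, inner_sub_left, real_inner_smul_left, real_inner_comm (A u) u,
      inner_apply_self_eq_zero_of_skew hA, mul_zero, sub_zero]
  have hcomm : ⟪S (A u) - A (S u), u⟫ = 2 * ⟪S u, A u⟫ := by
    rw [inner_sub_left, hS.apply_clm, hA (S u), real_inner_comm (A u)]
    ring
  rw [hcomm, ← hwA, inner_sub_right, inner_sub_right, hwS]
  ring

theorem inner_commutator_sub_norm_sq_le {S A : F →L[ℝ] F} (hS : (S : F →ₗ[ℝ] F).IsSymmetric)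
    (hA : ∀ x y, ⟪A x, y⟫ = -⟪x, A y⟫) {u : F} (hu : u ≠ 0) (v : F) :
    ⟪S (A u) - A (S u), u⟫ - ‖v - A u - S u‖ ^ 2 / 2
      ≤ 2 * ⟪S u - S.rayleighQuotient u • u, v⟫ := by
  rw [two_inner_sub_rayleighQuotient_smul_eq hS hA hu v]
  linarith [neg_norm_sq_div_four_le_inner_add_norm_sq (S u - S.rayleighQuotient u • u)
    (v - A u - S u)]

end ContinuousLinearMap

theorem HasDerivAt.rayleighQuotient {S : ℝ → F →L[ℝ] F} {S' : F →L[ℝ] F} {f : ℝ → F} {f' : F}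
    {t : ℝ} (hS : HasDerivAt S S' t) (hf : HasDerivAt f f' t)
    (hsym : (S t : F →ₗ[ℝ] F).IsSymmetric) (hne : f t ≠ 0) :
    HasDerivAt (fun s ↦ (S s).rayleighQuotient (f s))
      ((⟪S' (f t), f t⟫ + 2 * ⟪S t (f t) - (S t).rayleighQuotient (f t) • f t, f'⟫)
        / ‖f t‖ ^ 2) t := by
  have hnorm : ‖f t‖ ≠ 0 := norm_ne_zero_iff.mpr hne
  have hquot := ((hS.clm_apply hf).inner ℝ hf).div hf.norm_sq (pow_ne_zero 2 hnorm)
  refine hquot.congr_deriv ?_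
  rw [inner_add_left, hsym.apply_clm f', real_inner_comm (S t (f t)) f', inner_sub_left,
    real_inner_smul_left, ContinuousLinearMap.rayleighQuotient_eq_inner_div]
  field_simp
  ring

theorem inner_commutator_div_sub_le_deriv_rayleighQuotient {S : ℝ → F →L[ℝ] F}
    {S' A : F →L[ℝ] F} {f : ℝ → F} {f' : F} {t : ℝ} (hS : HasDerivAt S S' t)
    (hf : HasDerivAt f f' t) (hsym : (S t : F →ₗ[ℝ] F).IsSymmetric)
    (hskew : ∀ x y, ⟪A x, y⟫ = -⟪x, A y⟫) (hne : f t ≠ 0) :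
    ⟪S' (f t) + (S t (A (f t)) - A (S t (f t))), f t⟫ / ‖f t‖ ^ 2
        - ‖f' - A (f t) - S t (f t)‖ ^ 2 / (2 * ‖f t‖ ^ 2)
      ≤ deriv (fun s ↦ (S s).rayleighQuotient (f s)) t := by
  have hH : 0 < ‖f t‖ ^ 2 := by positivity
  rw [(hS.rayleighQuotient hf hsym hne).deriv, inner_add_left, ← div_div, ← sub_div, add_sub_assoc]
  gcongr
  linarith [ContinuousLinearMap.inner_commutator_sub_norm_sq_le hsym hskew hne f']

end RealInnerProductSpace

theorem frequency_derivative_lower_bound_general {E : Type*} [NormedAddCommGroup E]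
    [InnerProductSpace ℂ E]
    (f f' : ℝ → E) (S S' A : ℝ → E →L[ℂ] E)
    (hf : ∀ t, HasDerivAt f (f' t) t)
    (hS : ∀ t, HasDerivAt S (S' t) t)
    (hsym : ∀ (t : ℝ) (x y : E), (inner ℂ (S t x) y : ℂ) = inner ℂ x (S t y))
    (hskew : ∀ (t : ℝ) (x y : E), (inner ℂ (A t x) y : ℂ) = - inner ℂ x (A t y))
    (hne : ∀ t, f t ≠ 0)
    (t : ℝ) :
    ((inner ℂ (S' t (f t) + (S t (A t (f t)) - A t (S t (f t)))) (f t) : ℂ).re / ‖f t‖ ^ 2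
      - ‖f' t - A t (f t) - S t (f t)‖ ^ 2 / (2 * ‖f t‖ ^ 2))
    ≤ deriv (fun s => (inner ℂ (S s (f s)) (f s) : ℂ).re / ‖f s‖ ^ 2) t := by
  -- `complexToReal` makes `⟪x, y⟫_ℝ` definitionally `re ⟪x, y⟫_ℂ`, so the real statement applies.
  let _ : InnerProductSpace ℝ E := InnerProductSpace.complexToReal
  have hSℝ : HasDerivAt (fun s ↦ (S s).restrictScalars ℝ) ((S' t).restrictScalars ℝ) t :=
    (ContinuousLinearMap.restrictScalarsL ℂ E E ℝ ℝ).hasFDerivAt.comp_hasDerivAt t (hS t)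
  have hsymℝ : ((S t).restrictScalars ℝ : E →ₗ[ℝ] E).IsSymmetric := fun x y ↦
    congrArg Complex.re (hsym t x y)
  have hskewℝ : ∀ x y : E, ⟪(A t).restrictScalars ℝ x, y⟫ = -⟪x, (A t).restrictScalars ℝ y⟫ :=
    fun x y ↦ congrArg Complex.re (hskew t x y)
  exact inner_commutator_div_sub_le_deriv_rayleighQuotient hSℝ (hf t) hsymℝ hskewℝ (hne t)

/-- Abstract logarithmic convexity frequency bound: with `H(t) = ‖f(t)‖²`,
`D(t) = ⟨𝒮f, f⟩` and `N = D/H`, one has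
`∂_t N ≥ ⟨𝒮_t f + [𝒮,𝒜]f, f⟩/H - ‖∂_t f - 𝒜f - 𝒮f‖²/(2H)`. -/
theorem frequency_derivative_lower_bound {E : Type*} [NormedAddCommGroup E]
    [InnerProductSpace ℂ E]
    (f f' : ℝ → E) (S S' A : ℝ → E →L[ℂ] E)
    (hf : ∀ t, HasDerivAt f (f' t) t)
    (hS : ∀ t, HasDerivAt S (S' t) t)
    (hsym : ∀ (t : ℝ) (x y : E), (inner ℂ (S t x) y : ℂ) = inner ℂ x (S t y))
    (hskew : ∀ (t : ℝ) (x y : E), (inner ℂ (A t x) y : ℂ) = - inner ℂ x (A t y))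
    (hne : ∀ t, f t ≠ 0)
    (t : ℝ) (ht : t ∈ Set.Icc (0:ℝ) 1) :
    ((inner ℂ (S' t (f t) + (S t (A t (f t)) - A t (S t (f t)))) (f t) : ℂ).re / ‖f t‖ ^ 2
      - ‖f' t - A t (f t) - S t (f t)‖ ^ 2 / (2 * ‖f t‖ ^ 2))
    ≤ deriv (fun s => (inner ℂ (S s (f s)) (f s) : ℂ).re / ‖f s‖ ^ 2) t :=
  frequency_derivative_lower_bound_general f f' S S' A hf hS hsym hskew hne t
end

section
/- Under the abstract setting, ∂_t² H(t) = 2∂_t Re⟨∂_t f - 𝒮f - 𝒜f, f⟩ + 2⟨𝒮_t f + [𝒮,𝒜]f, f⟩ + ‖∂_t f - 𝒜f + 𝒮f‖² - ‖∂_t f - 𝒜f - 𝒮f‖². -/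
/-!
Since `𝒜` is skew, `Re⟨𝒜f, f⟩` vanishes identically, so the first term on the right is
`2 ∂_t (Re⟨∂_t f, f⟩ - Re⟨𝒮f, f⟩)`. Differentiating with `𝒮` symmetric, and using
`Re⟨[𝒮,𝒜]f, f⟩ = 2 Re⟨𝒜f, 𝒮f⟩` and `‖g + 𝒮f‖² - ‖g - 𝒮f‖² = 4 Re⟨g, 𝒮f⟩` with `g = ∂_t f - 𝒜f`,
the right-hand side collapses to `2 ‖∂_t f‖² + 2 Re⟨∂_t² f, f⟩ = ∂_t² H`.
-/

section RestrictScalars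

variable {𝕜 𝕜' : Type*} [NontriviallyNormedField 𝕜] [NontriviallyNormedField 𝕜']
  [NormedAlgebra 𝕜 𝕜'] {E F : Type*} [NormedAddCommGroup E] [NormedSpace 𝕜' E]
  [NormedSpace 𝕜 E] [IsScalarTower 𝕜 𝕜' E] [NormedAddCommGroup F] [NormedSpace 𝕜' F]
  [NormedSpace 𝕜 F] [IsScalarTower 𝕜 𝕜' F]

theorem HasDerivAt.clm_apply_restrictScalars {B : 𝕜 → E →L[𝕜'] F} {B' : E →L[𝕜'] F}
    {u : 𝕜 → E} {u' : E} {x : 𝕜} (hB : HasDerivAt B B' x) (hu : HasDerivAt u u' x) :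
    HasDerivAt (fun y => B y (u y)) (B' (u x) + B x u') x :=
  ((ContinuousLinearMap.restrictScalarsIsometry 𝕜' E F 𝕜 𝕜).toContinuousLinearMap.hasFDerivAt
    |>.comp_hasDerivAt x hB).clm_apply hu

end RestrictScalars

section InnerProductSpace

open RCLike

variable {𝕜 E : Type*} [RCLike 𝕜] [NormedAddCommGroup E] [InnerProductSpace 𝕜 E]

local notation "⟪" x ", " y "⟫" => inner 𝕜 x y

theorem norm_add_sq_sub_norm_sub_sq (x y : E) : ‖x + y‖ ^ 2 - ‖x - y‖ ^ 2 = 4 * re ⟪x, y⟫ := by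
  rw [norm_add_sq (𝕜 := 𝕜), norm_sub_sq (𝕜 := 𝕜)]
  ring

theorem re_inner_apply_self_eq_zero_of_skew {T : E → E} (hT : ∀ x y, ⟪T x, y⟫ = -⟪x, T y⟫)
    (x : E) : re ⟪T x, x⟫ = 0 := by
  have h := congrArg re (hT x x)
  rw [map_neg, inner_re_symm x] at h
  linarith

theorem re_inner_commutator_apply_self {S A : E → E} (hS : ∀ x y, ⟪S x, y⟫ = ⟪x, S y⟫)
    (hA : ∀ x y, ⟪A x, y⟫ = -⟪x, A y⟫) (x : E) :
    re ⟪S (A x) - A (S x), x⟫ = 2 * re ⟪A x, S x⟫ := by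
  rw [inner_sub_left, map_sub, hS (A x) x, hA (S x) x, map_neg, inner_re_symm (S x)]
  ring

variable [NormedSpace ℝ E] {u v : ℝ → E} {u' v' : E} {x : ℝ}

theorem HasDerivAt.re_inner (hu : HasDerivAt u u' x) (hv : HasDerivAt v v' x) :
    HasDerivAt (fun s => re ⟪u s, v s⟫) (re ⟪u x, v'⟫ + re ⟪u', v x⟫) x := by
  simpa only [reCLM_apply, map_add, Function.comp_def] using
    (reCLM (K := 𝕜)).hasFDerivAt.comp_hasDerivAt x (hu.inner 𝕜 hv)

theorem HasDerivAt.norm_sq_rclike (hu : HasDerivAt u u' x) :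
    HasDerivAt (fun s => ‖u s‖ ^ 2) (2 * re ⟪u', u x⟫) x := by
  have h := hu.re_inner (𝕜 := 𝕜) hu
  simp only [← norm_sq_eq_re_inner (𝕜 := 𝕜), inner_re_symm (u x) u'] at h
  rwa [two_mul]

theorem HasDerivAt.re_inner_apply_self [IsScalarTower ℝ 𝕜 E] {S : ℝ → E →L[𝕜] E}
    {S' : E →L[𝕜] E} (hS : HasDerivAt S S' x) (hu : HasDerivAt u u' x)
    (hsym : ∀ y z, ⟪S x y, z⟫ = ⟪y, S x z⟫) :
    HasDerivAt (fun s => re ⟪S s (u s), u s⟫) (re ⟪S' (u x), u x⟫ + 2 * re ⟪u', S x (u x)⟫) x := by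
  convert (hS.clm_apply_restrictScalars hu).re_inner hu using 1
  rw [inner_add_left, map_add, hsym u' (u x), inner_re_symm (S x (u x)) u']
  ring

end InnerProductSpace

open ComplexInnerProductSpace RCLike

theorem second_derivative_identity_general {E : Type*} [NormedAddCommGroup E]
    [InnerProductSpace ℂ E]
    (f f' f'' : ℝ → E) (S S' A : ℝ → E →L[ℂ] E)
    (hf : ∀ t, HasDerivAt f (f' t) t)
    (hf' : ∀ t, HasDerivAt f' (f'' t) t)
    (hS : ∀ t, HasDerivAt S (S' t) t)
    (hsym : ∀ (t : ℝ) (x y : E), (inner ℂ (S t x) y : ℂ) = inner ℂ x (S t y))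
    (hskew : ∀ (t : ℝ) (x y : E), (inner ℂ (A t x) y : ℂ) = - inner ℂ x (A t y))
    (t : ℝ) :
    deriv (deriv (fun s => ‖f s‖ ^ 2)) t =
      2 * deriv (fun s => (inner ℂ (f' s - S s (f s) - A s (f s)) (f s) : ℂ).re) t
      + 2 * (inner ℂ (S' t (f t) + (S t (A t (f t)) - A t (S t (f t)))) (f t) : ℂ).re
      + ‖f' t - A t (f t) + S t (f t)‖ ^ 2
      - ‖f' t - A t (f t) - S t (f t)‖ ^ 2 := by
  simp only [← RCLike.re_to_complex]
  have hH : deriv (fun s => ‖f s‖ ^ 2) = fun s => 2 * re ⟪f' s, f s⟫ :=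
    funext fun s => (hf s).norm_sq_rclike.deriv
  have hG : HasDerivAt (fun s => re ⟪f' s - S s (f s) - A s (f s), f s⟫)
      (re ⟪f' t, f' t⟫ + re ⟪f'' t, f t⟫ - (re ⟪S' t (f t), f t⟫ + 2 * re ⟪f' t, S t (f t)⟫)) t := by
    have hskew_zero s : re ⟪A s (f s), f s⟫ = 0 := re_inner_apply_self_eq_zero_of_skew (hskew s) _
    simp only [inner_sub_left, map_sub, hskew_zero, sub_zero]
    exact ((hf' t).re_inner (hf t)).sub ((hS t).re_inner_apply_self (hf t) (hsym t))
  rw [hH, (((hf' t).re_inner (hf t)).const_mul 2).deriv, hG.deriv, inner_add_left, map_add,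
    re_inner_commutator_apply_self (hsym t) (hskew t), add_sub_assoc,
    norm_add_sq_sub_norm_sub_sq (𝕜 := ℂ), inner_sub_left, map_sub]
  ring

/-- Abstract identity for the second derivative of `H(t) = ‖f(t)‖²`:
`∂_t² H = 2 ∂_t Re⟨∂_t f - 𝒮f - 𝒜f, f⟩ + 2⟨𝒮_t f + [𝒮,𝒜]f, f⟩
  + ‖∂_t f - 𝒜f + 𝒮f‖² - ‖∂_t f - 𝒜f - 𝒮f‖²`. -/
theorem second_derivative_identity {E : Type*} [NormedAddCommGroup E]
    [InnerProductSpace ℂ E]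
    (f f' f'' : ℝ → E) (S S' A A' : ℝ → E →L[ℂ] E)
    (hf : ∀ t, HasDerivAt f (f' t) t)
    (hf' : ∀ t, HasDerivAt f' (f'' t) t)
    (hS : ∀ t, HasDerivAt S (S' t) t)
    (hA : ∀ t, HasDerivAt A (A' t) t)
    (hsym : ∀ (t : ℝ) (x y : E), (inner ℂ (S t x) y : ℂ) = inner ℂ x (S t y))
    (hskew : ∀ (t : ℝ) (x y : E), (inner ℂ (A t x) y : ℂ) = - inner ℂ x (A t y))
    (t : ℝ) :
    deriv (deriv (fun s => ‖f s‖ ^ 2)) t =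
      2 * deriv (fun s => (inner ℂ (f' s - S s (f s) - A s (f s)) (f s) : ℂ).re) t
      + 2 * (inner ℂ (S' t (f t) + (S t (A t (f t)) - A t (S t (f t)))) (f t) : ℂ).re
      + ‖f' t - A t (f t) + S t (f t)‖ ^ 2
      - ‖f' t - A t (f t) - S t (f t)‖ ^ 2 :=
  second_derivative_identity_general f f' f'' S S' A hf hf' hS hsym hskew t
end

section
/- Let 𝒮, 𝒜 be as in the abstract lemma and suppose ‖∂_t f - (𝒮+𝒜)f‖ ≤ M₁‖f‖ + ‖W(t)‖ on [0,1], ⟨(𝒮_t + [𝒮,𝒜])g, g⟩ ≥ -M₀‖g‖² for all g, and M₂ = sup_{t∈[0,1]} ‖W(t)‖/‖f(t)‖ < ∞. If H(0), H(1) < ∞ and H(t) < ∞ for all t, then there is a universal constant N ≥ 0 such that H(t) ≤ e^{N(M₀+M₁+M₂+M₁²+M₂²)} H(0)^{1-t} H(1)^{t} for all t ∈ [0,1]. -/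
/-!
Write `f' = (S + A) f + e`, so that `‖e‖ ≤ M ‖f‖` with `M = M₁ + M₂`, and view `E` as a real
inner product space through `re ⟪·, ·⟫`. Skew-symmetry removes `A` from
`H' = 2 ⟪S f, f⟫ + 2 ⟪e, f⟫`, and the commutator bound together with Cauchy–Schwarz shows that
the frequency `⟪S f, f⟫ / H` has derivative at least `-(M₀ + M² / 2)`. Since `(log H)'` is twice
the frequency up to an error `2 M`, `log H` exceeds its chord over `[0, 1]` by at most
`M₀ + M² / 2 + M`, which gives the bound with `N = 1`. If `f` vanishes somewhere on `[0, 1]`,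
then `|H'| ≤ C H` and Grönwall forces `H = 0`.
-/

open Set Real

lemma mul_sub_le_sub_of_le_hasDerivAt {g g' : ℝ → ℝ} {a b C : ℝ} (hab : a ≤ b)
    (hg : ∀ t ∈ Icc a b, HasDerivAt g (g' t) t) (hC : ∀ t ∈ Icc a b, C ≤ g' t) :
    C * (b - a) ≤ g b - g a :=
  (convex_Icc a b).mul_sub_le_image_sub_of_le_deriv
    (fun t ht => (hg t ht).continuousAt.continuousWithinAt)
    (fun t ht => (hg t (interior_subset ht)).differentiableAt.differentiableWithinAt)
    (fun t ht => (hg t (interior_subset ht)).deriv ▸ hC t (interior_subset ht))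
    a (left_mem_Icc.2 hab) b (right_mem_Icc.2 hab) hab

lemma sub_le_mul_sub_of_hasDerivAt_le {g g' : ℝ → ℝ} {a b C : ℝ} (hab : a ≤ b)
    (hg : ∀ t ∈ Icc a b, HasDerivAt g (g' t) t) (hC : ∀ t ∈ Icc a b, g' t ≤ C) :
    g b - g a ≤ C * (b - a) :=
  (convex_Icc a b).image_sub_le_mul_sub_of_deriv_le
    (fun t ht => (hg t ht).continuousAt.continuousWithinAt)
    (fun t ht => (hg t (interior_subset ht)).differentiableAt.differentiableWithinAt)
    (fun t ht => (hg t (interior_subset ht)).deriv ▸ hC t (interior_subset ht))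
    a (left_mem_Icc.2 hab) b (right_mem_Icc.2 hab) hab

theorem eqOn_zero_of_norm_deriv_le_mul_norm {E : Type*} [NormedAddCommGroup E] [NormedSpace ℝ E]
    {f f' : ℝ → E} {K a b s : ℝ} (hf : ∀ t ∈ Icc a b, HasDerivAt f (f' t) t)
    (bound : ∀ t ∈ Icc a b, ‖f' t‖ ≤ K * ‖f t‖) (hs : s ∈ Icc a b) (hfs : f s = 0) :
    EqOn f 0 (Icc a b) := by
  intro t ht
  rcases le_total s t with hst | hts
  · have hsub : Icc s b ⊆ Icc a b := Icc_subset_Icc_left hs.1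
    exact eq_zero_of_abs_deriv_le_mul_abs_self_of_eq_zero_right
      (fun u hu => (hf u (hsub hu)).continuousAt.continuousWithinAt)
      (fun u hu => (hf u (hsub (Ico_subset_Icc_self hu))).hasDerivWithinAt) hfs
      (fun u hu => bound u (hsub (Ico_subset_Icc_self hu))) t ⟨hst, ht.2⟩
  · -- apply the forward case to the time-reversed curve `u ↦ f (-u)`
    have hsub : ∀ u ∈ Icc (-s) (-a), -u ∈ Icc a b := fun u hu =>
      ⟨le_neg.1 hu.2, (neg_le.1 hu.1).trans hs.2⟩
    have hrev : ∀ u ∈ Icc (-s) (-a), HasDerivAt (fun u => f (-u)) ((-1 : ℝ) • f' (-u)) u :=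
      fun u hu => (hf (-u) (hsub u hu)).scomp u (hasDerivAt_neg u)
    simpa using eq_zero_of_abs_deriv_le_mul_abs_self_of_eq_zero_right
      (fun u hu => (hrev u hu).continuousAt.continuousWithinAt)
      (fun u hu => (hrev u (Ico_subset_Icc_self hu)).hasDerivWithinAt) (by simpa using hfs)
      (fun u hu => by simpa using bound (-u) (hsub u (Ico_subset_Icc_self hu)))
      (-t) ⟨neg_le_neg hts, neg_le_neg ht.1⟩

theorem le_convexComb_add_of_abs_deriv_sub_le {G G' μ : ℝ → ℝ} {k m t : ℝ}
    (hG : ∀ s ∈ Icc (0 : ℝ) 1, HasDerivAt G (G' s) s)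
    (hG' : ∀ s ∈ Icc (0 : ℝ) 1, |G' s - μ s| ≤ m)
    (hμ : ∀ s ∈ Icc (0 : ℝ) 1, ∀ u ∈ Icc (0 : ℝ) 1, s ≤ u → μ s ≤ μ u + k)
    (ht : t ∈ Icc (0 : ℝ) 1) :
    G t ≤ (1 - t) * G 0 + t * G 1 + (k + m) / 2 := by
  obtain ⟨ht0, ht1⟩ := ht
  have h0 : (0 : ℝ) ∈ Icc (0 : ℝ) 1 := left_mem_Icc.2 zero_le_one
  have hk : 0 ≤ k := by simpa using hμ 0 h0 0 h0 le_rfl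
  have hm : 0 ≤ m := (abs_nonneg _).trans (hG' 0 h0)
  have hleft : G t - G 0 ≤ (μ t + k + m) * (t - 0) :=
    sub_le_mul_sub_of_hasDerivAt_le ht0 (fun s hs => hG s ⟨hs.1, hs.2.trans ht1⟩) fun s hs => by
      have hs' : s ∈ Icc (0 : ℝ) 1 := ⟨hs.1, hs.2.trans ht1⟩
      linarith [(abs_le.1 (hG' s hs')).2, hμ s hs' t ⟨ht0, ht1⟩ hs.2]
  have hright : (μ t - k - m) * (1 - t) ≤ G 1 - G t :=
    mul_sub_le_sub_of_le_hasDerivAt ht1 (fun s hs => hG s ⟨ht0.trans hs.1, hs.2⟩) fun s hs => by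
      have hs' : s ∈ Icc (0 : ℝ) 1 := ⟨ht0.trans hs.1, hs.2⟩
      linarith [(abs_le.1 (hG' s hs')).1, hμ t ⟨ht0, ht1⟩ s hs' hs.1]
  nlinarith [mul_le_mul_of_nonneg_left hleft (sub_nonneg.2 ht1),
    mul_le_mul_of_nonneg_left hright ht0, mul_nonneg (add_nonneg hk hm) (sq_nonneg (2 * t - 1))]

lemma le_exp_mul_rpow_mul_rpow_of_log_le {a b c C t : ℝ} (ha : 0 < a) (hb : 0 < b) (hc : 0 < c)
    (h : log c ≤ (1 - t) * log a + t * log b + C) : c ≤ exp C * a ^ (1 - t) * b ^ t := by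
  calc c = exp (log c) := (exp_log hc).symm
    _ ≤ exp (C + log a * (1 - t) + log b * t) := exp_le_exp.2 (by linarith)
    _ = exp C * a ^ (1 - t) * b ^ t := by
      rw [exp_add, exp_add, rpow_def_of_pos ha, rpow_def_of_pos hb]

theorem le_exp_mul_rpow_mul_rpow_of_frequency {H D r d : ℝ → ℝ} {M k t : ℝ} (hk : 0 ≤ k)
    (hpos : ∀ s ∈ Icc (0 : ℝ) 1, 0 < H s)
    (hH : ∀ s ∈ Icc (0 : ℝ) 1, HasDerivAt H (2 * (D s + r s)) s)
    (hD : ∀ s ∈ Icc (0 : ℝ) 1, HasDerivAt D (d s) s)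
    (hr : ∀ s ∈ Icc (0 : ℝ) 1, |r s| ≤ M * H s)
    (hd : ∀ s ∈ Icc (0 : ℝ) 1, -k * H s ^ 2 ≤ d s * H s - D s * (2 * (D s + r s)))
    (ht : t ∈ Icc (0 : ℝ) 1) :
    H t ≤ exp (k + M) * H 0 ^ (1 - t) * H 1 ^ t := by
  have hfreq : ∀ s ∈ Icc (0 : ℝ) 1, HasDerivAt (fun u => D u / H u)
      ((d s * H s - D s * (2 * (D s + r s))) / H s ^ 2) s :=
    fun s hs => (hD s hs).div (hH s hs) (hpos s hs).ne'
  have hmono : ∀ s ∈ Icc (0 : ℝ) 1, ∀ u ∈ Icc (0 : ℝ) 1, s ≤ u →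
      2 * (D s / H s) ≤ 2 * (D u / H u) + 2 * k := by
    intro s hs u hu hsu
    have hsub : ∀ v ∈ Icc s u, v ∈ Icc (0 : ℝ) 1 := fun v hv => ⟨hs.1.trans hv.1, hv.2.trans hu.2⟩
    have hslope := mul_sub_le_sub_of_le_hasDerivAt hsu (fun v hv => hfreq v (hsub v hv))
      fun v hv => (le_div_iff₀ (pow_pos (hpos v (hsub v hv)) 2)).2 (hd v (hsub v hv))
    nlinarith [mul_le_mul_of_nonneg_left (show u - s ≤ 1 by linarith [hs.1, hu.2]) hk]
  have hlog : ∀ s ∈ Icc (0 : ℝ) 1, HasDerivAt (fun u => log (H u)) (2 * (D s + r s) / H s) s :=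
    fun s hs => (hH s hs).log (hpos s hs).ne'
  have hgap : ∀ s ∈ Icc (0 : ℝ) 1, |2 * (D s + r s) / H s - 2 * (D s / H s)| ≤ 2 * M := by
    intro s hs
    have hHs := hpos s hs
    rw [show 2 * (D s + r s) / H s - 2 * (D s / H s) = 2 * (r s / H s) by ring, abs_mul,
      abs_two, abs_div, abs_of_pos hHs]
    gcongr
    exact (div_le_iff₀ hHs).2 (hr s hs)
  have hconv := le_convexComb_add_of_abs_deriv_sub_le hlog hgap hmono ht
  exact le_exp_mul_rpow_mul_rpow_of_log_le (hpos 0 (left_mem_Icc.2 zero_le_one))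
    (hpos 1 (right_mem_Icc.2 zero_le_one)) (hpos t ht) (by linarith)

open scoped RealInnerProductSpace

section InnerProduct

variable {F : Type*} [NormedAddCommGroup F] [InnerProductSpace ℝ F]

lemma real_inner_mul_inner_add_le (x y e : F) :
    ⟪x, y⟫ * (⟪x, y⟫ + ⟪e, y⟫) ≤ ‖y‖ ^ 2 * (‖x‖ ^ 2 + ⟪x, e⟫) + ‖y‖ ^ 2 * ‖e‖ ^ 2 / 4 := by
  -- Cauchy–Schwarz for `x + e / 2` and `y`
  have h := real_inner_mul_inner_self_le (x + (2⁻¹ : ℝ) • e) y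
  simp only [inner_add_left, inner_add_right, real_inner_smul_left, real_inner_smul_right,
    real_inner_self_eq_norm_sq, real_inner_comm x e, norm_smul, norm_inv, RCLike.norm_ofNat] at h
  nlinarith [sq_nonneg ⟪e, y⟫]

lemma hasDerivAt_norm_sq_of_skew {f : ℝ → F} {v : F} {t : ℝ} (S A : F →L[ℝ] F)
    (hf : HasDerivAt f v t) (hA : ∀ x y, ⟪A x, y⟫ = -⟪x, A y⟫) :
    HasDerivAt (fun s => ‖f s‖ ^ 2) (2 * (⟪S (f t), f t⟫ + ⟪v - (S (f t) + A (f t)), f t⟫)) t := by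
  convert hf.norm_sq using 1
  have hA0 := hA (f t) (f t)
  rw [real_inner_comm (A (f t)) (f t)] at hA0
  simp only [inner_sub_left, inner_add_left, real_inner_comm v (f t)]
  linarith

lemma hasDerivAt_inner_apply_self {S : ℝ → F →L[ℝ] F} {S₀' A : F →L[ℝ] F} {f : ℝ → F} {v : F}
    {t : ℝ} (hS : HasDerivAt S S₀' t) (hf : HasDerivAt f v t)
    (hsym : ∀ x y, ⟪S t x, y⟫ = ⟪x, S t y⟫) (hA : ∀ x y, ⟪A x, y⟫ = -⟪x, A y⟫) :
    HasDerivAt (fun s => ⟪S s (f s), f s⟫)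
      (⟪S₀' (f t) + (S t (A (f t)) - A (S t (f t))), f t⟫ +
        2 * (‖S t (f t)‖ ^ 2 + ⟪S t (f t), v - (S t (f t) + A (f t))⟫)) t := by
  refine ((hS.clm_apply hf).inner ℝ hf).congr_deriv ?_
  have h1 := hsym (A (f t)) (f t)
  have h2 := hA (S t (f t)) (f t)
  have h3 := hsym v (f t)
  simp only [inner_add_left, inner_sub_left, inner_sub_right, inner_add_right,
    real_inner_self_eq_norm_sq]
  linarith [real_inner_comm (A (f t)) (S t (f t)), real_inner_comm v (S t (f t))]

lemma frequency_deriv_lower_bound (x y e : F) {c M₀ M : ℝ} (hc : -M₀ * ‖x‖ ^ 2 ≤ c)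
    (he : ‖e‖ ≤ M * ‖x‖) :
    -(M₀ + M ^ 2 / 2) * (‖x‖ ^ 2) ^ 2 ≤
      (c + 2 * (‖y‖ ^ 2 + ⟪y, e⟫)) * ‖x‖ ^ 2 - ⟪y, x⟫ * (2 * (⟪y, x⟫ + ⟪e, x⟫)) := by
  have hgram := real_inner_mul_inner_add_le y x e
  have he2 : ‖e‖ ^ 2 ≤ M ^ 2 * ‖x‖ ^ 2 := by
    rw [← mul_pow]; exact pow_le_pow_left₀ (norm_nonneg e) he 2
  nlinarith [mul_le_mul_of_nonneg_right hc (sq_nonneg ‖x‖),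
    mul_le_mul_of_nonneg_right he2 (sq_nonneg ‖x‖)]

lemma abs_inner_apply_self_add_inner_le (S : F →L[ℝ] F) (x e : F) {M : ℝ}
    (he : ‖e‖ ≤ M * ‖x‖) : |⟪S x, x⟫ + ⟪e, x⟫| ≤ (‖S‖ + M) * ‖x‖ ^ 2 := by
  calc |⟪S x, x⟫ + ⟪e, x⟫| ≤ ‖S x‖ * ‖x‖ + ‖e‖ * ‖x‖ :=
        (abs_add_le _ _).trans
          (add_le_add (abs_real_inner_le_norm _ _) (abs_real_inner_le_norm _ _))
    _ ≤ ‖S‖ * ‖x‖ * ‖x‖ + M * ‖x‖ * ‖x‖ := by gcongr; exact S.le_opNorm x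
    _ = (‖S‖ + M) * ‖x‖ ^ 2 := by ring

theorem norm_sq_le_exp_mul_rpow_mul_rpow {f f' : ℝ → F} {S S' A : ℝ → F →L[ℝ] F} {M₀ M t : ℝ}
    (hM₀ : 0 ≤ M₀) (hf : ∀ s ∈ Icc (0 : ℝ) 1, HasDerivAt f (f' s) s)
    (hS : ∀ s ∈ Icc (0 : ℝ) 1, HasDerivAt S (S' s) s)
    (hsym : ∀ s ∈ Icc (0 : ℝ) 1, ∀ x y, ⟪S s x, y⟫ = ⟪x, S s y⟫)
    (hA : ∀ s ∈ Icc (0 : ℝ) 1, ∀ x y, ⟪A s x, y⟫ = -⟪x, A s y⟫)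
    (herr : ∀ s ∈ Icc (0 : ℝ) 1, ‖f' s - (S s (f s) + A s (f s))‖ ≤ M * ‖f s‖)
    (hcomm : ∀ s ∈ Icc (0 : ℝ) 1,
      -M₀ * ‖f s‖ ^ 2 ≤ ⟪S' s (f s) + (S s (A s (f s)) - A s (S s (f s))), f s⟫)
    (ht : t ∈ Icc (0 : ℝ) 1) :
    ‖f t‖ ^ 2 ≤ exp (M₀ + M ^ 2 / 2 + M) * (‖f 0‖ ^ 2) ^ (1 - t) * (‖f 1‖ ^ 2) ^ t := by
  have hH := fun s hs => hasDerivAt_norm_sq_of_skew (S s) (A s) (hf s hs) (hA s hs)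
  by_cases hpos : ∀ s ∈ Icc (0 : ℝ) 1, 0 < ‖f s‖ ^ 2
  · refine le_exp_mul_rpow_mul_rpow_of_frequency (by positivity) hpos hH
      (fun s hs => hasDerivAt_inner_apply_self (hS s hs) (hf s hs) (hsym s hs) (hA s hs))
      (fun s hs => (abs_real_inner_le_norm _ _).trans ?_)
      (fun s hs => frequency_deriv_lower_bound _ _ _ (hcomm s hs) (herr s hs)) ht
    rw [sq, ← mul_assoc]
    exact mul_le_mul_of_nonneg_right (herr s hs) (norm_nonneg _)
  · push Not at hpos
    obtain ⟨s, hs, hs0⟩ := hpos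
    obtain ⟨K, hK⟩ := isCompact_Icc.exists_bound_of_continuousOn fun s hs =>
      (hS s hs).continuousAt.continuousWithinAt
    have hzero := eqOn_zero_of_norm_deriv_le_mul_norm hH (K := 2 * (K + M)) (fun u hu => by
      rw [Real.norm_eq_abs, Real.norm_eq_abs, abs_mul, abs_two, abs_of_nonneg (sq_nonneg ‖f u‖),
        mul_assoc]
      gcongr
      exact (abs_inner_apply_self_add_inner_le _ _ _ (herr u hu)).trans (by gcongr; exact hK u hu))
      hs (le_antisymm hs0 (by positivity)) ht
    rw [show ‖f t‖ ^ 2 = 0 from hzero]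
    positivity

end InnerProduct

/-- Abstract logarithmic convexity lemma (Escauriaza–Kenig–Ponce–Vega): under the stated
bounds there is a universal constant `N ≥ 0` such that
`H(t) ≤ e^{N(M₀+M₁+M₂+M₁²+M₂²)} H(0)^{1-t} H(1)^t` on `[0,1]`. -/
theorem abstract_log_convexity :
    ∃ N : ℝ, 0 ≤ N ∧
      ∀ (E : Type) [NormedAddCommGroup E] [InnerProductSpace ℂ E]
        (f f' : ℝ → E) (S S' A : ℝ → E →L[ℂ] E) (W : ℝ → E) (M₀ M₁ M₂ : ℝ),
        0 ≤ M₀ → 0 ≤ M₁ → 0 ≤ M₂ →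
        (∀ t, HasDerivAt f (f' t) t) →
        (∀ t, HasDerivAt S (S' t) t) →
        (∀ (t : ℝ) (x y : E), (inner ℂ (S t x) y : ℂ) = inner ℂ x (S t y)) →
        (∀ (t : ℝ) (x y : E), (inner ℂ (A t x) y : ℂ) = - inner ℂ x (A t y)) →
        (∀ t ∈ Set.Icc (0:ℝ) 1,
          ‖f' t - (S t (f t) + A t (f t))‖ ≤ M₁ * ‖f t‖ + ‖W t‖) →
        (∀ t ∈ Set.Icc (0:ℝ) 1, ∀ g : E,
          -M₀ * ‖g‖ ^ 2 ≤ (inner ℂ (S' t g + (S t (A t g) - A t (S t g))) g : ℂ).re) →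
        (∀ t ∈ Set.Icc (0:ℝ) 1, ‖W t‖ ≤ M₂ * ‖f t‖) →
        ∀ t ∈ Set.Icc (0:ℝ) 1,
          ‖f t‖ ^ 2 ≤ Real.exp (N * (M₀ + M₁ + M₂ + M₁ ^ 2 + M₂ ^ 2)) *
            (‖f 0‖ ^ 2) ^ (1 - t) * (‖f 1‖ ^ 2) ^ t := by
  refine ⟨1, zero_le_one, ?_⟩
  intro E _ _ f f' S S' A W M₀ M₁ M₂ hM₀ _ _ hf hS hsym hskew herr hcomm hW t ht
  let _ : InnerProductSpace ℝ E := InnerProductSpace.complexToReal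
  have hre : ∀ x y : E, ⟪x, y⟫ = (inner ℂ x y).re := fun _ _ => rfl
  have key := norm_sq_le_exp_mul_rpow_mul_rpow (f := f) (M := M₁ + M₂)
    (S := fun s => (S s).restrictScalars ℝ) (S' := fun s => (S' s).restrictScalars ℝ)
    (A := fun s => (A s).restrictScalars ℝ) hM₀ (fun s _ => hf s)
    (fun s _ =>
      (ContinuousLinearMap.restrictScalarsL ℂ E E ℝ ℝ).hasFDerivAt.comp_hasDerivAt s (hS s))
    (fun s _ x y => by simp [hre, hsym s x y])
    (fun s _ x y => by simp [hre, hskew s x y])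
    (fun s hs => (herr s hs).trans (by linarith [hW s hs]))
    (fun s hs => hcomm s hs (f s)) ht
  refine key.trans ?_
  gcongr
  nlinarith [sq_nonneg (M₁ - M₂)]
end
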